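/- Let λ, λ₀, and λ_n (n ∈ ℕ) be finite Borel measures on a compact metric space X with λ₀ ≠ 0, λ_n ≪ λ for all n, λ₀ ≪ λ, and sup over measurable sets A of |λ_n(A) − λ₀(A)| tends to 0 as n → ∞. Let T : X → Y be a measurable map into a measurable space Y whose σ-algebra is countably generated and contains all singleton sets, and let μ be a σ-finite measure on Y with T_*λ ≪ μ. Let (λ_t^n), (λ_t^0), and (λ_t) be (T,μ)-disintegrations of λ_n, λ₀, and λ respectively. If for μ-a.e. t every λ_t^n is completely atomic (there is a countable set C ⊆ X with λ_t^n(X ∖ C) = 0), then λ_t^0 is completely atomic for μ-a.e. t; and if for μ-a.e. t every λ_t^n is non-atomic (λ_t^n({x}) = 0 for every x ∈ X), then λ_t^0 is non-atomic for μ-a.e. t. -/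

import Mathlib

open MeasureTheory ENNReal

/-- A `(T, μ)`-disintegration of a measure `ν` on `X`. -/
def IsDisintegration {X Y : Type*} [MeasurableSpace X] [MeasurableSpace Y]
    (ν : Measure X) (T : X → Y) (μ : Measure Y) (lam : Y → Measure X) : Prop :=
  (∀ᵐ t ∂μ, lam t ((T ⁻¹' {t})ᶜ) = 0) ∧
  (∀ f : X → ℝ≥0∞, Measurable f →
      AEMeasurable (fun t => ∫⁻ x, f x ∂(lam t)) μ) ∧
  (∀ f : X → ℝ≥0∞, Measurable f →
      ∫⁻ x, f x ∂ν = ∫⁻ t, ∫⁻ x, f x ∂(lam t) ∂μ)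

/-- The total-variation-type distance between two (possibly infinite) measures:
the supremum over measurable sets of `|α A - β A|`, computed in `ℝ≥0∞` via
truncated subtraction. -/
noncomputable def tvDist {X : Type*} [MeasurableSpace X] (α β : Measure X) : ℝ≥0∞ :=
  ⨆ (A : Set X) (_ : MeasurableSet A), ((α A - β A) + (β A - α A))

/-!
Restricting a disintegration to `E ∩ T ⁻¹' G` gives `∫⁻ t in G, λ_t E ∂μ`. Gluing such sets over a
countable family `E_k`, on disjoint measurable pieces `G_k` of the set of fibres where
`λ_t^n E_k + ε < λ_t^0 E_k`, produces a single set on which `λ_0 - λ_n` is at least `ε` times the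
`μ`-measure of those fibres. Since `tvDist λ_n λ_0 → 0`, for `μ`-a.e. `t` and every `δ > 0` some
`λ_t^n` dominates `λ_t^0` up to `δ` simultaneously on the complements of all finite unions of basic
open sets, hence (continuity from above) on all closed sets, hence (inner regularity of `λ_t^0`)
`λ_t^0 (⋂ n, A_n) = 0` whenever `λ_t^n A_n = 0` for every `n`. The two claims are the cases
`A_n = C_nᶜ` with `C_n` countable, and `A_n = {x}`.
-/

open Filter Set TopologicalSpace Function

lemma sub_le_tvDist {X : Type*} [MeasurableSpace X] (α β : Measure X) {A : Set X}
    (hA : MeasurableSet A) : β A - α A ≤ tvDist α β :=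
  le_add_self.trans <|
    le_iSup₂ (f := fun A (_ : MeasurableSet A) => (α A - β A) + (β A - α A)) A hA

namespace IsDisintegration

variable {X Y : Type*} [MeasurableSpace X] [MeasurableSpace Y] {T : X → Y} {μ : Measure Y}
  {ν : Measure X} {lam : Y → Measure X} {E : Set X}

lemma measure_eq_lintegral (h : IsDisintegration ν T μ lam) (hE : MeasurableSet E) :
    ν E = ∫⁻ t, lam t E ∂μ := by
  simpa [lintegral_indicator_one hE] using h.2.2 (E.indicator 1) (measurable_one.indicator hE)

lemma aemeasurable_measure (h : IsDisintegration ν T μ lam) (hE : MeasurableSet E) :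
    AEMeasurable (fun t => lam t E) μ := by
  simpa [lintegral_indicator_one hE] using h.2.1 (E.indicator 1) (measurable_one.indicator hE)

lemma ae_isFiniteMeasure [IsFiniteMeasure ν] (h : IsDisintegration ν T μ lam) :
    ∀ᵐ t ∂μ, IsFiniteMeasure (lam t) := by
  have hfin : ∫⁻ t, lam t univ ∂μ ≠ ∞ := h.measure_eq_lintegral .univ ▸ measure_ne_top ν univ
  filter_upwards [ae_lt_top' (h.aemeasurable_measure .univ) hfin] with t ht using ⟨ht⟩

lemma measure_inter_preimage (h : IsDisintegration ν T μ lam) (hT : Measurable T)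
    (hE : MeasurableSet E) {G : Set Y} (hG : MeasurableSet G) :
    ν (E ∩ T ⁻¹' G) = ∫⁻ t in G, lam t E ∂μ := by
  rw [h.measure_eq_lintegral (hE.inter (hT hG)), ← lintegral_indicator hG]
  refine lintegral_congr_ae ?_
  filter_upwards [h.1] with t ht
  by_cases htG : t ∈ G
  · rw [indicator_of_mem htG]
    refine measure_inter_conull (measure_mono_null (fun x hx (hxt : T x = t) => hx ?_) ht)
    exact show T x ∈ G from hxt ▸ htG
  · rw [indicator_of_notMem htG]
    exact measure_mono_null (fun x hx (hxt : T x = t) => htG (hxt ▸ hx.2)) ht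

lemma measure_iUnion_inter_preimage (h : IsDisintegration ν T μ lam) (hT : Measurable T)
    {E : ℕ → Set X} (hE : ∀ k, MeasurableSet (E k)) {G : ℕ → Set Y}
    (hG : ∀ k, MeasurableSet (G k)) (hGd : Pairwise (Disjoint on G)) :
    ν (⋃ k, E k ∩ T ⁻¹' G k) = ∑' k, ∫⁻ t in G k, lam t (E k) ∂μ := by
  rw [measure_iUnion (fun j k hjk => ((hGd hjk).preimage T).mono inter_subset_right
    inter_subset_right) fun k => (hE k).inter (hT (hG k))]
  exact tsum_congr fun k => h.measure_inter_preimage hT (hE k) (hG k)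

lemma mul_measure_setOf_exists_add_lt_le_tvDist {ρ : Measure X} [IsFiniteMeasure ρ]
    {lamρ : Y → Measure X} (hρ : IsDisintegration ρ T μ lamρ) (hν : IsDisintegration ν T μ lam)
    (hT : Measurable T) {E : ℕ → Set X} (hE : ∀ k, MeasurableSet (E k)) (ε : ℝ≥0∞) :
    ε * μ {t | ∃ k, lamρ t (E k) + ε < lam t (E k)} ≤ tvDist ρ ν := by
  have hS k : NullMeasurableSet {t | lamρ t (E k) + ε < lam t (E k)} μ :=
    nullMeasurableSet_lt ((hρ.aemeasurable_measure (hE k)).add_const ε)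
      (hν.aemeasurable_measure (hE k))
  choose P hPS hP hPS_ae using fun k => (hS k).exists_measurable_subset_ae_eq
  set G := disjointed P
  have hG : ∀ k, MeasurableSet (G k) := .disjointed hP
  set W := ⋃ k, E k ∩ T ⁻¹' G k
  have hW : MeasurableSet W := .iUnion fun k => (hE k).inter (hT (hG k))
  have hG_le k : ∫⁻ t in G k, lamρ t (E k) ∂μ + ε * μ (G k) ≤ ∫⁻ t in G k, lam t (E k) ∂μ :=
    calc _ = ∫⁻ t in G k, (lamρ t (E k) + ε) ∂μ := by
          rw [lintegral_add_right _ measurable_const, setLIntegral_const, mul_comm]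
      _ ≤ _ := setLIntegral_mono' (hG k) fun t ht => (hPS k (disjointed_subset P k ht)).le
  have hW_le : ρ W + ε * μ (⋃ k, G k) ≤ ν W := by
    rw [hρ.measure_iUnion_inter_preimage hT hE hG (disjoint_disjointed P),
      hν.measure_iUnion_inter_preimage hT hE hG (disjoint_disjointed P),
      measure_iUnion (disjoint_disjointed P) hG, ← ENNReal.tsum_mul_left, ← ENNReal.tsum_add]
    exact ENNReal.tsum_le_tsum hG_le
  calc ε * μ {t | ∃ k, lamρ t (E k) + ε < lam t (E k)} = ε * μ (⋃ k, G k) := by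
        rw [iUnion_disjointed, measure_congr (Filter.EventuallyEq.countable_iUnion hPS_ae),
          ofPred_exists]
    _ ≤ ν W - ρ W := ENNReal.le_sub_of_add_le_left (measure_ne_top ρ W) hW_le
    _ ≤ tvDist ρ ν := sub_le_tvDist ρ ν hW

lemma ae_forall_exists_forall_le_add {ν₀ : Measure X} {νn : ℕ → Measure X}
    [∀ n, IsFiniteMeasure (νn n)] (htv : Tendsto (fun n => tvDist (νn n) ν₀) atTop (nhds 0))
    (hT : Measurable T) {lam₀ : Y → Measure X} {lamn : ℕ → Y → Measure X}
    (hdis₀ : IsDisintegration ν₀ T μ lam₀) (hdisn : ∀ n, IsDisintegration (νn n) T μ (lamn n))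
    {E : ℕ → Set X} (hE : ∀ k, MeasurableSet (E k)) :
    ∀ᵐ t ∂μ, ∀ δ ≠ 0, ∃ n, ∀ k, lam₀ t (E k) ≤ lamn n t (E k) + δ := by
  have hbad (j : ℕ) :
      μ {t | ∀ n, ∃ k, lamn n t (E k) + (j : ℝ≥0∞)⁻¹ < lam₀ t (E k)} = 0 := by
    have hle n : (j : ℝ≥0∞)⁻¹ * μ {t | ∀ n, ∃ k, lamn n t (E k) + (j : ℝ≥0∞)⁻¹ < lam₀ t (E k)}
        ≤ tvDist (νn n) ν₀ :=
      le_trans (by gcongr; exact fun ht => ht n)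
        ((hdisn n).mul_measure_setOf_exists_add_lt_le_tvDist hdis₀ hT hE _)
    simpa using le_antisymm (ge_of_tendsto' htv hle) bot_le
  filter_upwards [ae_all_iff.2 fun j => measure_eq_zero_iff_ae_notMem.1 (hbad j)] with t ht δ hδ
  obtain ⟨j, hj⟩ := ENNReal.exists_inv_nat_lt hδ
  obtain ⟨n, hn⟩ : ∃ n, ∀ k, ¬ lamn n t (E k) + (j : ℝ≥0∞)⁻¹ < lam₀ t (E k) := by
    simpa using ht j
  exact ⟨n, fun k => (not_lt.1 (hn k)).trans (add_le_add_right hj.le _)⟩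

end IsDisintegration

lemma TopologicalSpace.IsTopologicalBasis.measure_le_add_of_forall_compl_biUnion
    {X : Type*} [TopologicalSpace X] [MeasurableSpace X] [OpensMeasurableSpace X]
    {b : ℕ → Set X} (hb : IsTopologicalBasis (range b)) {m₀ m : Measure X} [IsFiniteMeasure m]
    {δ : ℝ≥0∞} (h : ∀ s : Finset ℕ, m₀ (⋃ i ∈ s, b i)ᶜ ≤ m (⋃ i ∈ s, b i)ᶜ + δ)
    {C : Set X} (hC : IsClosed C) : m₀ C ≤ m C + δ := by
  classical
  set V : ℕ → Set X := fun j => (⋃ i ∈ (Finset.range j).filter (b · ⊆ Cᶜ), b i)ᶜ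
  have hV_anti : Antitone V := fun j k hjk => compl_subset_compl.2 <|
    biUnion_subset_biUnion_left <|
      Finset.coe_subset.2 (Finset.filter_subset_filter _ (Finset.range_mono hjk))
  have hV_iInter : ⋂ j, V j = C := by
    rw [← compl_iUnion, compl_eq_comm]
    refine Subset.antisymm (fun x hx => ?_) (by simp)
    obtain ⟨_, ⟨i, rfl⟩, hxi, hiC⟩ := hb.exists_subset_of_mem_open hx hC.isOpen_compl
    exact mem_iUnion.2 ⟨i + 1, mem_iUnion₂.2 ⟨i, by simp [hiC], hxi⟩⟩
  have hV_meas j : MeasurableSet (V j) :=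
    (Finset.measurableSet_biUnion _ fun i _ => (hb.isOpen (mem_range_self i)).measurableSet).compl
  have hlim : Tendsto (fun j => m (V j) + δ) atTop (nhds (m C + δ)) := by
    rw [← hV_iInter]
    exact (tendsto_measure_iInter_atTop (fun j => (hV_meas j).nullMeasurableSet) hV_anti
      ⟨0, measure_ne_top m _⟩).add_const δ
  exact ge_of_tendsto' hlim fun j =>
    (measure_mono (hV_iInter.symm.subset.trans (iInter_subset V j))).trans (h _)

lemma measure_iInter_eq_zero_of_forall_exists_isClosed_le_add {X : Type*} [TopologicalSpace X]
    [MeasurableSpace X] {m₀ : Measure X} [IsFiniteMeasure m₀] [m₀.WeaklyRegular]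
    {m : ℕ → Measure X} (h : ∀ δ ≠ 0, ∃ n, ∀ C, IsClosed C → m₀ C ≤ m n C + δ)
    {A : ℕ → Set X} (hA : ∀ n, MeasurableSet (A n)) (hm : ∀ n, m n (A n) = 0) :
    m₀ (⋂ n, A n) = 0 := by
  refine le_antisymm (ENNReal.le_of_forall_pos_le_add fun ε hε _ => ?_) bot_le
  have hε2 : (ε : ℝ≥0∞) / 2 ≠ 0 := by simpa using hε.ne'
  obtain ⟨n, hn⟩ := h _ hε2
  obtain ⟨K, hKA, hK, hlt⟩ := (MeasurableSet.iInter hA).exists_isClosed_lt_add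
    (measure_ne_top m₀ _) hε2
  have hK0 : m n K = 0 := measure_mono_null (hKA.trans (iInter_subset A n)) (hm n)
  calc m₀ (⋂ n, A n) ≤ m₀ K + ε / 2 := hlt.le
    _ ≤ m n K + ε / 2 + ε / 2 := add_le_add_left (hn K hK) _
    _ = 0 + ε := by rw [hK0, add_assoc, ENNReal.add_halves]

lemma IsDisintegration.ae_forall_exists_forall_isClosed_le_add {X Y : Type*}
    [TopologicalSpace X] [SecondCountableTopology X] [MeasurableSpace X] [OpensMeasurableSpace X]
    [MeasurableSpace Y] {T : X → Y} {μ : Measure Y} {ν₀ : Measure X} {νn : ℕ → Measure X}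
    [∀ n, IsFiniteMeasure (νn n)] (htv : Tendsto (fun n => tvDist (νn n) ν₀) atTop (nhds 0))
    (hT : Measurable T) {lam₀ : Y → Measure X} {lamn : ℕ → Y → Measure X}
    (hdis₀ : IsDisintegration ν₀ T μ lam₀) (hdisn : ∀ n, IsDisintegration (νn n) T μ (lamn n)) :
    ∀ᵐ t ∂μ, ∀ δ ≠ 0, ∃ n, ∀ C, IsClosed C → lam₀ t C ≤ lamn n t C + δ := by
  obtain ⟨b, hb⟩ := exists_seq_basis X
  obtain ⟨e, he⟩ := exists_surjective_nat (Finset ℕ)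
  have hE k : MeasurableSet (⋃ i ∈ e k, b i)ᶜ :=
    (Finset.measurableSet_biUnion _ fun i _ => (hb.isOpen (mem_range_self i)).measurableSet).compl
  filter_upwards [hdis₀.ae_forall_exists_forall_le_add htv hT hdisn hE,
    ae_all_iff.2 fun n => (hdisn n).ae_isFiniteMeasure] with t happrox hfin δ hδ
  obtain ⟨n, hn⟩ := happrox δ hδ
  have : IsFiniteMeasure (lamn n t) := hfin n
  refine ⟨n, fun C hC => hb.measure_le_add_of_forall_compl_biUnion (fun s => ?_) hC⟩
  obtain ⟨k, rfl⟩ := he s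
  exact hn k

theorem disintegration_atomic_and_nonatomic_limit_general
    {X Y : Type*} [MetricSpace X] [CompactSpace X]
    [MeasurableSpace X] [BorelSpace X]
    [MeasurableSpace Y]
    (ν₀ : Measure X) [IsFiniteMeasure ν₀]
    (νn : ℕ → Measure X) [∀ n, IsFiniteMeasure (νn n)]
    (htv : Filter.Tendsto (fun n => tvDist (νn n) ν₀) Filter.atTop (nhds 0))
    (T : X → Y) (hT : Measurable T)
    (μ : Measure Y)
    (lamn : ℕ → Y → Measure X) (lam₀ : Y → Measure X)
    (hdisn : ∀ n, IsDisintegration (νn n) T μ (lamn n))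
    (hdis₀ : IsDisintegration ν₀ T μ lam₀) :
    ((∀ᵐ t ∂μ, ∀ n, ∃ C : Set X, C.Countable ∧ lamn n t Cᶜ = 0) →
        ∀ᵐ t ∂μ, ∃ C : Set X, C.Countable ∧ lam₀ t Cᶜ = 0) ∧
    ((∀ᵐ t ∂μ, ∀ n, ∀ x : X, lamn n t {x} = 0) →
        ∀ᵐ t ∂μ, ∀ x : X, lam₀ t {x} = 0) := by
  have happrox := hdis₀.ae_forall_exists_forall_isClosed_le_add htv hT hdisn
  constructor
  · intro hatomic
    filter_upwards [hatomic, happrox, hdis₀.ae_isFiniteMeasure] with t hC happrox_t _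
    choose C hC_countable hC_null using hC
    refine ⟨⋃ n, C n, countable_iUnion hC_countable, ?_⟩
    rw [compl_iUnion]
    exact measure_iInter_eq_zero_of_forall_exists_isClosed_le_add happrox_t
      (fun n => (hC_countable n).measurableSet.compl) hC_null
  · intro hnonatomic
    filter_upwards [hnonatomic, happrox, hdis₀.ae_isFiniteMeasure] with t hnull happrox_t _ x
    simpa only [iInter_const] using
      measure_iInter_eq_zero_of_forall_exists_isClosed_le_add happrox_t (A := fun _ => {x})
        (fun _ => measurableSet_singleton x) (fun n => hnull n x)

theorem disintegration_atomic_and_nonatomic_limit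
    {X Y : Type*} [MetricSpace X] [CompactSpace X]
    [MeasurableSpace X] [BorelSpace X]
    [MeasurableSpace Y] [MeasurableSpace.CountablyGenerated Y] [MeasurableSingletonClass Y]
    (ν : Measure X) [IsFiniteMeasure ν]
    (ν₀ : Measure X) [IsFiniteMeasure ν₀] (hν₀ : ν₀ ≠ 0)
    (νn : ℕ → Measure X) [∀ n, IsFiniteMeasure (νn n)]
    (habsn : ∀ n, νn n ≪ ν) (habs₀ : ν₀ ≪ ν)
    (htv : Filter.Tendsto (fun n => tvDist (νn n) ν₀) Filter.atTop (nhds 0))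
    (T : X → Y) (hT : Measurable T)
    (μ : Measure Y) [SigmaFinite μ]
    (habs : ν.map T ≪ μ)
    (lamn : ℕ → Y → Measure X) (lam₀ lam : Y → Measure X)
    (hdisn : ∀ n, IsDisintegration (νn n) T μ (lamn n))
    (hdis₀ : IsDisintegration ν₀ T μ lam₀)
    (hdis : IsDisintegration ν T μ lam) :
    ((∀ᵐ t ∂μ, ∀ n, ∃ C : Set X, C.Countable ∧ lamn n t Cᶜ = 0) →
        ∀ᵐ t ∂μ, ∃ C : Set X, C.Countable ∧ lam₀ t Cᶜ = 0) ∧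
    ((∀ᵐ t ∂μ, ∀ n, ∀ x : X, lamn n t {x} = 0) →
        ∀ᵐ t ∂μ, ∀ x : X, lam₀ t {x} = 0) :=
  disintegration_atomic_and_nonatomic_limit_general ν₀ νn htv T hT μ lamn lam₀ hdisn hdis₀
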